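/- Let π¹ and π² be groups acting trivially on ℚ/ℤ. Then H²(π¹ × π², ℚ/ℤ) is isomorphic to the direct sum H²(π¹, ℚ/ℤ) ⊕ H²(π², ℚ/ℤ) ⊕ Hom((π¹)ᵃᵇ ⊗_ℤ (π²)ᵃᵇ, ℚ/ℤ), where (−)ᵃᵇ denotes abelianization. -/

import Mathlib

/-!
A 2-cocycle `f` on `G₁ × G₂` with trivial coefficients is determined up to coboundaries by its
restrictions to the two factors and by the pairing
`(x, y) ↦ f ((1, y), (x, 1)) - f ((x, 1), (1, y))`. The cocycle identity makes this pairing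
biadditive and it vanishes on coboundaries, so it factors through `G₁ᵃᵇ ⊗ G₂ᵃᵇ`. Conversely,
cocycles `c₁, c₂` on the factors and a homomorphism `φ` on `G₁ᵃᵇ ⊗ G₂ᵃᵇ` assemble into the cocycle
`((g₁, g₂), (h₁, h₂)) ↦ c₁ (g₁, h₁) + c₂ (g₂, h₂) + φ (h₁ ⊗ g₂)`. Assembling the data of `f` gives
back `f` up to the coboundary of `(g₁, g₂) ↦ f ((g₁, 1), (1, g₂))`.
-/

open TensorProduct

namespace Abelianization

variable {G G₁ G₂ V : Type*} [Group G] [Group G₁] [Group G₂] [AddCommGroup V]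

def liftAdd (β : G → V) (hβ : ∀ x y, β (x * y) = β x + β y) : Additive (Abelianization G) →+ V :=
  MonoidHom.toAdditiveLeft
    (lift (MonoidHom.mk' (fun g => Multiplicative.ofAdd (β g)) fun x y => congrArg _ (hβ x y)))

theorem addMonoidHom_ext {φ ψ : Additive (Abelianization G) →+ V}
    (h : ∀ x, φ (Additive.ofMul (of x)) = ψ (Additive.ofMul (of x))) : φ = ψ :=
  AddMonoidHom.ext fun z => QuotientGroup.induction_on (C := fun a => φ (.ofMul a) = ψ (.ofMul a))
    z.toMul h

def tmulOf (x : G₁) (y : G₂) : Additive (Abelianization G₁) ⊗[ℤ] Additive (Abelianization G₂) :=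
  Additive.ofMul (of x) ⊗ₜ Additive.ofMul (of y)

@[simp]
theorem tmulOf_mul_left (x x' : G₁) (y : G₂) : tmulOf (x * x') y = tmulOf x y + tmulOf x' y := by
  simp only [tmulOf, map_mul, ofMul_mul, add_tmul]

@[simp]
theorem tmulOf_mul_right (x : G₁) (y y' : G₂) : tmulOf x (y * y') = tmulOf x y + tmulOf x y' := by
  simp only [tmulOf, map_mul, ofMul_mul, tmul_add]

@[simp]
theorem tmulOf_one_left (y : G₂) : tmulOf (1 : G₁) y = 0 := by
  simp only [tmulOf, map_one, ofMul_one, zero_tmul]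

@[simp]
theorem tmulOf_one_right (x : G₁) : tmulOf x (1 : G₂) = 0 := by
  simp only [tmulOf, map_one, ofMul_one, tmul_zero]

theorem tensor_addMonoidHom_ext
    {φ ψ : Additive (Abelianization G₁) ⊗[ℤ] Additive (Abelianization G₂) →+ V}
    (h : ∀ x y, φ (tmulOf x y) = ψ (tmulOf x y)) : φ = ψ :=
  AddMonoidHom.toIntLinearMap_injective <| TensorProduct.ext' fun a b =>
    QuotientGroup.induction_on
      (C := fun a => φ (.ofMul a ⊗ₜ b) = ψ (.ofMul a ⊗ₜ b)) a.toMul fun x =>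
    QuotientGroup.induction_on
      (C := fun b => φ (.ofMul (of x) ⊗ₜ .ofMul b) = ψ (.ofMul (of x) ⊗ₜ .ofMul b)) b.toMul
      fun y => h x y

def tensorLift (β : G₁ → G₂ → V) (h₁ : ∀ x x' y, β (x * x') y = β x y + β x' y)
    (h₂ : ∀ x y y', β x (y * y') = β x y + β x y') :
    Additive (Abelianization G₁) ⊗[ℤ] Additive (Abelianization G₂) →+ V :=
  liftAddHom (liftAdd (fun x => liftAdd (β x) (h₂ x)) fun x x' =>
      addMonoidHom_ext fun y => h₁ x x' y)
    fun r m n => by rw [map_zsmul, map_zsmul, AddMonoidHom.zsmul_apply]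

@[simp]
theorem tensorLift_tmulOf (β : G₁ → G₂ → V) (h₁ h₂) (x : G₁) (y : G₂) :
    tensorLift β h₁ h₂ (tmulOf x y) = β x y := rfl

end Abelianization

universe u

namespace groupCohomology

section Quotient

variable {k G : Type u} [CommRing k] [Group G] (A : Rep k G)

abbrev H2Quotient : Type _ := cocycles₂ A ⧸ (coboundaries₂ A).comap (cocycles₂ A).subtype

noncomputable def H2LinearEquivQuotient : H2 A ≃ₗ[k] H2Quotient A :=
  ((H2π A).hom.quotKerEquivOfSurjective
      ((ModuleCat.epi_iff_surjective _).1 inferInstance)).symm ≪≫ₗ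
    Submodule.quotEquivOfEq _ _ (by ext x; exact H2π_eq_zero_iff x)

end Quotient

section Trivial

variable {G H : Type} {V : Type} [Group G] [Group H] [AddCommGroup V]

theorem mem_cocycles₂_trivial_iff (f : G × G → V) :
    f ∈ cocycles₂ (Rep.trivial ℤ G V) ↔
      ∀ g h j : G, f (g * h, j) + f (g, h) = f (h, j) + f (g, h * j) := by
  simp only [mem_cocycles₂_iff, Representation.trivial_apply]

theorem mem_coboundaries₂_trivial_iff (f : G × G → V) :
    f ∈ coboundaries₂ (Rep.trivial ℤ G V) ↔
      ∃ u : G → V, ∀ g h : G, u h - u (g * h) + u g = f (g, h) := by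
  simp only [coboundaries₂, LinearMap.mem_range, funext_iff, d₁₂_hom_apply, Prod.forall,
    Representation.trivial_apply]

theorem cocycles₂_trivial_map_mul (f : cocycles₂ (Rep.trivial ℤ G V)) (g h j : G) :
    f (g * h, j) + f (g, h) = f (h, j) + f (g, h * j) :=
  (mem_cocycles₂_trivial_iff _).1 f.2 g h j

theorem cocycles₂_trivial_map_one_snd (f : cocycles₂ (Rep.trivial ℤ G V)) (g : G) :
    f (g, 1) = f (1, 1) :=
  cocycles₂_map_one_snd f g

def cocycles₂Comap (V : Type) [AddCommGroup V] (φ : G →* H) :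
    cocycles₂ (Rep.trivial ℤ H V) →ₗ[ℤ] cocycles₂ (Rep.trivial ℤ G V) where
  toFun f := ⟨fun p => f (φ p.1, φ p.2), (mem_cocycles₂_trivial_iff _).2 fun g h j => by
    simpa only [map_mul] using cocycles₂_trivial_map_mul f (φ g) (φ h) (φ j)⟩
  map_add' _ _ := rfl
  map_smul' _ _ := rfl

@[simp]
theorem cocycles₂Comap_apply (φ : G →* H) (f : cocycles₂ (Rep.trivial ℤ H V)) (g h : G) :
    cocycles₂Comap V φ f (g, h) = f (φ g, φ h) := rfl

theorem cocycles₂Comap_mem_coboundaries₂ (φ : G →* H) {f : cocycles₂ (Rep.trivial ℤ H V)}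
    (hf : ⇑f ∈ coboundaries₂ (Rep.trivial ℤ H V)) :
    ⇑(cocycles₂Comap V φ f) ∈ coboundaries₂ (Rep.trivial ℤ G V) := by
  obtain ⟨u, hu⟩ := (mem_coboundaries₂_trivial_iff _).1 hf
  exact (mem_coboundaries₂_trivial_iff _).2 ⟨u ∘ φ, fun g h => by simpa using hu (φ g) (φ h)⟩

theorem cocycles₂Comap_one_mem_coboundaries₂ (f : cocycles₂ (Rep.trivial ℤ H V)) :
    ⇑(cocycles₂Comap V (1 : G →* H) f) ∈ coboundaries₂ (Rep.trivial ℤ G V) :=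
  (mem_coboundaries₂_trivial_iff _).2 ⟨fun _ => f (1, 1), fun _ _ => by simp⟩

@[simp]
theorem cocycles₂Comap_comap {K : Type} [Group K] (φ : G →* H) (ψ : H →* K)
    (f : cocycles₂ (Rep.trivial ℤ K V)) :
    cocycles₂Comap V φ (cocycles₂Comap V ψ f) = cocycles₂Comap V (ψ.comp φ) f := rfl

@[simp]
theorem cocycles₂Comap_id (f : cocycles₂ (Rep.trivial ℤ G V)) :
    cocycles₂Comap V (MonoidHom.id G) f = f := rfl

@[simp]
theorem mk_cocycles₂Comap_one (f : cocycles₂ (Rep.trivial ℤ H V)) :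
    (Submodule.Quotient.mk (cocycles₂Comap V (1 : G →* H) f) :
      H2Quotient (Rep.trivial ℤ G V)) = 0 :=
  (Submodule.Quotient.mk_eq_zero _).2 (cocycles₂Comap_one_mem_coboundaries₂ f)

noncomputable def H2QuotientComap (V : Type) [AddCommGroup V] (φ : G →* H) :
    H2Quotient (Rep.trivial ℤ H V) →ₗ[ℤ] H2Quotient (Rep.trivial ℤ G V) :=
  Submodule.mapQ _ _ (cocycles₂Comap V φ) fun _ => cocycles₂Comap_mem_coboundaries₂ φ

@[simp]
theorem H2QuotientComap_mk (φ : G →* H) (f : cocycles₂ (Rep.trivial ℤ H V)) :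
    H2QuotientComap V φ (Submodule.Quotient.mk f) = Submodule.Quotient.mk (cocycles₂Comap V φ f) :=
  rfl

end Trivial

section Product

open Abelianization

variable {G₁ G₂ : Type} [Group G₁] [Group G₂] {V : Type} [AddCommGroup V]

/-- This measures the failure of lifts of `(x, 1)` and `(1, y)` to commute in the central
extension classified by `f`. -/
def commutatorPairing (f : cocycles₂ (Rep.trivial ℤ (G₁ × G₂) V)) (x : G₁) (y : G₂) : V :=
  f ((1, y), (x, 1)) - f ((x, 1), (1, y))

theorem commutatorPairing_mul_left (f : cocycles₂ (Rep.trivial ℤ (G₁ × G₂) V)) (x x' : G₁)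
    (y : G₂) :
    commutatorPairing f (x * x') y = commutatorPairing f x y + commutatorPairing f x' y := by
  have e₁ := cocycles₂_trivial_map_mul f (x, 1) (x', 1) (1, y)
  have e₂ := cocycles₂_trivial_map_mul f (x, 1) (1, y) (x', 1)
  have e₃ := cocycles₂_trivial_map_mul f (1, y) (x, 1) (x', 1)
  simp only [Prod.mk_mul_mk, one_mul, mul_one] at e₁ e₂ e₃
  unfold commutatorPairing
  linear_combination (norm := abel) -e₁ + e₂ - e₃

theorem commutatorPairing_mul_right (f : cocycles₂ (Rep.trivial ℤ (G₁ × G₂) V)) (x : G₁)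
    (y y' : G₂) :
    commutatorPairing f x (y * y') = commutatorPairing f x y + commutatorPairing f x y' := by
  have e₁ := cocycles₂_trivial_map_mul f (1, y) (1, y') (x, 1)
  have e₂ := cocycles₂_trivial_map_mul f (1, y) (x, 1) (1, y')
  have e₃ := cocycles₂_trivial_map_mul f (x, 1) (1, y) (1, y')
  simp only [Prod.mk_mul_mk, one_mul, mul_one] at e₁ e₂ e₃
  unfold commutatorPairing
  linear_combination (norm := abel) e₁ - e₂ + e₃

theorem commutatorPairing_eq_zero {f : cocycles₂ (Rep.trivial ℤ (G₁ × G₂) V)}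
    (hf : ⇑f ∈ coboundaries₂ (Rep.trivial ℤ (G₁ × G₂) V)) (x : G₁) (y : G₂) :
    commutatorPairing f x y = 0 := by
  obtain ⟨u, hu⟩ := (mem_coboundaries₂_trivial_iff _).1 hf
  have e₁ := hu (1, y) (x, 1)
  have e₂ := hu (x, 1) (1, y)
  simp only [Prod.mk_mul_mk, mul_one, one_mul] at e₁ e₂
  unfold commutatorPairing
  linear_combination (norm := abel) e₂ - e₁

def tensorCommutatorPairing (f : cocycles₂ (Rep.trivial ℤ (G₁ × G₂) V)) :
    Additive (Abelianization G₁) ⊗[ℤ] Additive (Abelianization G₂) →+ V :=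
  tensorLift (commutatorPairing f) (commutatorPairing_mul_left f) (commutatorPairing_mul_right f)

@[simp]
theorem tensorCommutatorPairing_tmulOf (f : cocycles₂ (Rep.trivial ℤ (G₁ × G₂) V)) (x : G₁)
    (y : G₂) : tensorCommutatorPairing f (tmulOf x y) = commutatorPairing f x y := rfl

theorem tensorCommutatorPairing_add (f f' : cocycles₂ (Rep.trivial ℤ (G₁ × G₂) V)) :
    tensorCommutatorPairing (f + f') = tensorCommutatorPairing f + tensorCommutatorPairing f' :=
  tensor_addMonoidHom_ext fun _ _ => add_sub_add_comm _ _ _ _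

def tensorCocycle (φ : Additive (Abelianization G₁) ⊗[ℤ] Additive (Abelianization G₂) →+ V) :
    cocycles₂ (Rep.trivial ℤ (G₁ × G₂) V) :=
  ⟨fun p => φ (tmulOf p.2.1 p.1.2), (mem_cocycles₂_trivial_iff _).2 fun g h j => by
    simp only [Prod.fst_mul, Prod.snd_mul, tmulOf_mul_left, tmulOf_mul_right, map_add]
    abel⟩

@[simp]
theorem tensorCocycle_apply
    (φ : Additive (Abelianization G₁) ⊗[ℤ] Additive (Abelianization G₂) →+ V) (g h : G₁ × G₂) : tensorCocycle φ (g, h) = φ (tmulOf h.1 g.2) := rfl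

theorem tensorCocycle_add
    (φ ψ : Additive (Abelianization G₁) ⊗[ℤ] Additive (Abelianization G₂) →+ V) :
    tensorCocycle (φ + ψ) = tensorCocycle φ + tensorCocycle ψ := rfl

@[simp]
theorem tensorCommutatorPairing_tensorCocycle
    (φ : Additive (Abelianization G₁) ⊗[ℤ] Additive (Abelianization G₂) →+ V) :
    tensorCommutatorPairing (tensorCocycle φ) = φ :=
  tensor_addMonoidHom_ext fun x y => by simp [commutatorPairing]

@[simp]
theorem tensorCommutatorPairing_comap_fst (f : cocycles₂ (Rep.trivial ℤ G₁ V)) :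
    tensorCommutatorPairing (cocycles₂Comap V (MonoidHom.fst G₁ G₂) f) = 0 :=
  tensor_addMonoidHom_ext fun x y => by
    simp [commutatorPairing, cocycles₂_map_one_fst, cocycles₂_trivial_map_one_snd]

@[simp]
theorem tensorCommutatorPairing_comap_snd (f : cocycles₂ (Rep.trivial ℤ G₂ V)) :
    tensorCommutatorPairing (cocycles₂Comap V (MonoidHom.snd G₁ G₂) f) = 0 :=
  tensor_addMonoidHom_ext fun x y => by
    simp [commutatorPairing, cocycles₂_map_one_fst, cocycles₂_trivial_map_one_snd]

@[simp]
theorem cocycles₂Comap_inl_tensorCocycle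
    (φ : Additive (Abelianization G₁) ⊗[ℤ] Additive (Abelianization G₂) →+ V) :
    cocycles₂Comap V (MonoidHom.inl G₁ G₂) (tensorCocycle φ) = 0 := by
  ext; simp; rfl

@[simp]
theorem cocycles₂Comap_inr_tensorCocycle
    (φ : Additive (Abelianization G₁) ⊗[ℤ] Additive (Abelianization G₂) →+ V) :
    cocycles₂Comap V (MonoidHom.inr G₁ G₂) (tensorCocycle φ) = 0 := by
  ext; simp; rfl

theorem reassemble_sub_mem_coboundaries₂ (f : cocycles₂ (Rep.trivial ℤ (G₁ × G₂) V)) :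
    ⇑(cocycles₂Comap V ((MonoidHom.inl G₁ G₂).comp (MonoidHom.fst G₁ G₂)) f +
      cocycles₂Comap V ((MonoidHom.inr G₁ G₂).comp (MonoidHom.snd G₁ G₂)) f +
      tensorCocycle (tensorCommutatorPairing f) - f) ∈
      coboundaries₂ (Rep.trivial ℤ (G₁ × G₂) V) := by
  refine (mem_coboundaries₂_trivial_iff _).2 ⟨fun g => f ((g.1, 1), (1, g.2)), ?_⟩
  rintro ⟨g₁, g₂⟩ ⟨h₁, h₂⟩
  have e₁ := cocycles₂_trivial_map_mul f (g₁, 1) (1, g₂) (h₁, h₂)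
  have e₂ := cocycles₂_trivial_map_mul f (1, g₂) (h₁, 1) (1, h₂)
  have e₃ := cocycles₂_trivial_map_mul f (g₁, 1) (h₁, 1) (1, g₂ * h₂)
  have e₄ := cocycles₂_trivial_map_mul f (h₁, 1) (1, g₂) (1, h₂)
  simp only [Prod.mk_mul_mk, one_mul, mul_one] at e₁ e₂ e₃ e₄
  change f ((h₁, 1), (1, h₂)) - f ((g₁ * h₁, 1), (1, g₂ * h₂)) + f ((g₁, 1), (1, g₂)) =
    f ((g₁, 1), (h₁, 1)) + f ((1, g₂), (1, h₂)) + commutatorPairing f h₁ g₂ -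
    f ((g₁, g₂), (h₁, h₂))
  unfold commutatorPairing
  linear_combination (norm := abel) e₁ - e₂ - e₃ + e₄

variable (G₁ G₂ V) in
noncomputable def H2QuotientProdToSum : H2Quotient (Rep.trivial ℤ (G₁ × G₂) V) →ₗ[ℤ]
    H2Quotient (Rep.trivial ℤ G₁ V) × H2Quotient (Rep.trivial ℤ G₂ V) ×
      (Additive (Abelianization G₁) ⊗[ℤ] Additive (Abelianization G₂) →+ V) :=
  (H2QuotientComap V (MonoidHom.inl G₁ G₂)).prod <|
    (H2QuotientComap V (MonoidHom.inr G₁ G₂)).prod <|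
      Submodule.liftQ _
        { toFun := tensorCommutatorPairing
          map_add' := tensorCommutatorPairing_add
          map_smul' := fun n _ => tensor_addMonoidHom_ext fun _ _ => (smul_sub n _ _).symm }
        fun _ hf => LinearMap.mem_ker.2 <| tensor_addMonoidHom_ext (commutatorPairing_eq_zero hf)

variable (G₁ G₂ V) in
noncomputable def H2QuotientSumToProd :
    H2Quotient (Rep.trivial ℤ G₁ V) × H2Quotient (Rep.trivial ℤ G₂ V) ×
      (Additive (Abelianization G₁) ⊗[ℤ] Additive (Abelianization G₂) →+ V) →ₗ[ℤ]
    H2Quotient (Rep.trivial ℤ (G₁ × G₂) V) :=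
  (H2QuotientComap V (MonoidHom.fst G₁ G₂)).coprod <|
    (H2QuotientComap V (MonoidHom.snd G₁ G₂)).coprod <|
      Submodule.mkQ _ ∘ₗ
        { toFun := tensorCocycle
          map_add' := tensorCocycle_add
          map_smul' := fun _ _ => by ext; rfl }

theorem H2QuotientProdToSum_sumToProd (x) :
    H2QuotientProdToSum G₁ G₂ V (H2QuotientSumToProd G₁ G₂ V x) = x := by
  obtain ⟨a, b, φ⟩ := x
  induction a using Submodule.Quotient.induction_on
  induction b using Submodule.Quotient.induction_on
  simp [H2QuotientProdToSum, H2QuotientSumToProd]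

theorem H2QuotientSumToProd_prodToSum (x) :
    H2QuotientSumToProd G₁ G₂ V (H2QuotientProdToSum G₁ G₂ V x) = x := by
  induction x using Submodule.Quotient.induction_on with | H f => ?_
  simp only [H2QuotientSumToProd, H2QuotientProdToSum, LinearMap.prod_apply, Function.prod_apply,
    H2QuotientComap_mk, Submodule.liftQ_apply, LinearMap.coe_mk, AddHom.coe_mk,
    LinearMap.coprod_apply, cocycles₂Comap_comap, LinearMap.coe_comp, Function.comp_apply,
    Submodule.mkQ_apply]
  rw [← Submodule.Quotient.mk_add, ← Submodule.Quotient.mk_add, Submodule.Quotient.eq, ← add_assoc]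
  exact reassemble_sub_mem_coboundaries₂ f

end Product

variable (G₁ G₂ : Type) [Group G₁] [Group G₂] (V : Type) [AddCommGroup V]

noncomputable def H2QuotientProdEquiv : H2Quotient (Rep.trivial ℤ (G₁ × G₂) V) ≃ₗ[ℤ]
    H2Quotient (Rep.trivial ℤ G₁ V) × H2Quotient (Rep.trivial ℤ G₂ V) ×
      (Additive (Abelianization G₁) ⊗[ℤ] Additive (Abelianization G₂) →+ V) :=
  .ofLinearMap (f := H2QuotientProdToSum G₁ G₂ V) (g := H2QuotientSumToProd G₁ G₂ V)
    (LinearMap.ext H2QuotientProdToSum_sumToProd) (LinearMap.ext H2QuotientSumToProd_prodToSum)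

noncomputable def H2ProdAddEquiv : H2 (Rep.trivial ℤ (G₁ × G₂) V) ≃+
    H2 (Rep.trivial ℤ G₁ V) × H2 (Rep.trivial ℤ G₂ V) ×
      (Additive (Abelianization G₁) ⊗[ℤ] Additive (Abelianization G₂) →+ V) :=
  (H2LinearEquivQuotient _).toAddEquiv.trans <| (H2QuotientProdEquiv G₁ G₂ V).toAddEquiv.trans <|
    (H2LinearEquivQuotient _).toAddEquiv.symm.prodCongr <|
      (H2LinearEquivQuotient _).toAddEquiv.symm.prodCongr (AddEquiv.refl _)

end groupCohomology

/-- For groups `π¹, π²` acting trivially on `ℚ/ℤ`,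
`H²(π¹ × π², ℚ/ℤ) ≅ H²(π¹, ℚ/ℤ) ⊕ H²(π², ℚ/ℤ) ⊕ Hom((π¹)ᵃᵇ ⊗_ℤ (π²)ᵃᵇ, ℚ/ℤ)`. -/
theorem stmt6 (G₁ G₂ : Type) [Group G₁] [Group G₂] :
    Nonempty
      (groupCohomology.H2 (Rep.trivial ℤ (G₁ × G₂) (AddCircle (1 : ℚ))) ≃+
        (groupCohomology.H2 (Rep.trivial ℤ G₁ (AddCircle (1 : ℚ))) ×
         groupCohomology.H2 (Rep.trivial ℤ G₂ (AddCircle (1 : ℚ))) ×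
         ((Additive (Abelianization G₁) ⊗[ℤ] Additive (Abelianization G₂)) →+
           AddCircle (1 : ℚ)))) :=
  ⟨groupCohomology.H2ProdAddEquiv G₁ G₂ _⟩
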